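/- arXiv:1811.04964 — 4 statements merged into one kernel-verified Lean document; each statement's English description precedes it below -/
import Mathlib

section
/- Let Φ be the ℤ-algebra automorphism of the group algebra R[B_n] that is semilinear over the ring automorphism of R given by a ↦ a^{-1}, b ↦ b^{-1}, c ↦ c^{-1} and sends each generator s_i to s_i^{-1}, and let Ψ be the ℤ-algebra anti-automorphism of R[B_n] semilinear over the same ring automorphism of R with Ψ(g) = g^{-1} for every g ∈ B_n. Then, in H_3, Φ(r_1) = a^{-2} r_1 and Ψ(r_1) = −a^{-2} r_1. Consequently, for every n ≥ 3, Φ induces a ℤ-algebra automorphism φ of Q_n, Ψ induces a ℤ-algebra anti-automorphism ψ of Q_n, and φ∘ψ = ψ∘φ is an R-algebra anti-automorphism of Q_n fixing each s_i. -/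
/-!
Both `Φ` and `Ψ` are pinned down by their values on scalars and on generators: on a basis
element they act by `Φ(r g) = τ(r) β(g)` and `Ψ(r g) = τ(r) g⁻¹`, where `τ` inverts `a, b, c`
and `β` is the endomorphism of `B_n` inverting every generator. Applied to the twelve terms of
`r₁` this permutes them and rescales their coefficients, so `Φ(r₁) = a⁻² r₁` and
`Ψ(r₁) = -a⁻² r₁` hold already in `R[B_n]`. Both maps also send the cubic relation to a unit
multiple of itself, because `s⁻¹` is a root of `(X - a⁻¹)(X - b⁻¹)(X - c⁻¹)` as soon as `s` is
a root of `(X - a)(X - b)(X - c)`. Hence they descend to `Q_n`. There they are involutions and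
commute, as they do on `R[B_n]` (check on basis elements), and `ψ ∘ φ` is `τ ∘ τ = id` on
scalars and fixes every `sᵢ`.
-/

noncomputable section
open scoped Classical Pointwise

namespace Cubic

/-- The braid relations on `m` generators. -/
def braidRels (m : ℕ) : Set (FreeGroup (Fin m)) :=
  { r | (∃ i j : Fin m, (i : ℕ) + 1 = (j : ℕ) ∧
          r = FreeGroup.of i * FreeGroup.of j * FreeGroup.of i *
              (FreeGroup.of j * FreeGroup.of i * FreeGroup.of j)⁻¹) ∨
        (∃ i j : Fin m, (i : ℕ) + 2 ≤ (j : ℕ) ∧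
          r = FreeGroup.of i * FreeGroup.of j * (FreeGroup.of j * FreeGroup.of i)⁻¹) }

/-- The braid group with `m` Artin generators, i.e. the braid group on `m+1` strands. -/
def BraidGroup (m : ℕ) : Type := PresentedGroup (braidRels m)

instance (m : ℕ) : Group (BraidGroup m) :=
  inferInstanceAs (Group (PresentedGroup (braidRels m)))

/-- The Artin generator with index `i`; this is `s_{i+1}` in the usual numbering. -/
def σ {m : ℕ} (i : Fin m) : BraidGroup m := PresentedGroup.of i

/-- The group algebra of the braid group with `m` Artin generators over `R`. -/
abbrev BA (R : Type) [CommRing R] (m : ℕ) : Type := MonoidAlgebra R (BraidGroup m)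

/-- The canonical image of a braid in the group algebra. -/
def ι {R : Type} [CommRing R] {m : ℕ} (g : BraidGroup m) : BA R m :=
  MonoidAlgebra.of R (BraidGroup m) g

/-- The congruence relation associated to a two-sided ideal. -/
def idRel {A : Type} [Ring A] (I : TwoSidedIdeal A) : A → A → Prop :=
  fun x y => x - y ∈ I

/-- Quotient of a ring by a two-sided ideal. -/
abbrev QuotI {A : Type} [Ring A] (I : TwoSidedIdeal A) : Type := RingQuot (idRel I)

section general
variable (R : Type) [CommRing R]

/-- The cubic element `(s₁-a)(s₁-b)(s₁-c)` in the group algebra of the braid group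
on `m+2` strands. -/
def cubicElt (a b c : R) (m : ℕ) : BA R (m+1) :=
  (ι (σ 0) - algebraMap R (BA R (m+1)) a) * (ι (σ 0) - algebraMap R (BA R (m+1)) b) *
    (ι (σ 0) - algebraMap R (BA R (m+1)) c)

/-- The defining two-sided ideal of the cubic Hecke algebra. -/
def cubicIdeal (a b c : R) (m : ℕ) : TwoSidedIdeal (BA R (m+1)) :=
  TwoSidedIdeal.span {cubicElt R a b c m}

/-- The cubic Hecke algebra `H_{m+2}` on `m+2` strands. -/
abbrev Hecke (a b c : R) (m : ℕ) : Type := QuotI (cubicIdeal R a b c m)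

/-- Canonical projection onto the cubic Hecke algebra. -/
def heckeMk (a b c : R) (m : ℕ) : BA R (m+1) →ₐ[R] Hecke R a b c m :=
  RingQuot.mkAlgHom R (idRel (cubicIdeal R a b c m))

/-- The quadratic element `(s₁-x)(s₁-y)`. -/
def quadElt (x y : R) (m : ℕ) : BA R (m+1) :=
  (ι (σ 0) - algebraMap R (BA R (m+1)) x) * (ι (σ 0) - algebraMap R (BA R (m+1)) y)

/-- The two-sided ideal `J_n(x,y)` generated by the quadratic relation. -/
def J (x y : R) (m : ℕ) : TwoSidedIdeal (BA R (m+1)) :=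
  TwoSidedIdeal.span {quadElt R x y m}

/-- The Iwahori–Hecke algebra `H_{m+2}(x,y)` with parameters `x`, `y`. -/
abbrev HeckeQ (x y : R) (m : ℕ) : Type := QuotI (J R x y m)

/-- Canonical projection onto the quadratic Hecke algebra. -/
def heckeQMk (x y : R) (m : ℕ) : BA R (m+1) →ₐ[R] HeckeQ R x y m :=
  RingQuot.mkAlgHom R (idRel (J R x y m))

/-- The tripled quadratic Hecke algebra `ℋ_{m+2}`. -/
abbrev TripleHecke (a b c : R) (m : ℕ) : Type :=
  QuotI (J R a b m ⊓ J R a c m ⊓ J R b c m)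

/-- Canonical projection onto the tripled quadratic Hecke algebra. -/
def tMk (a b c : R) (m : ℕ) : BA R (m+1) →ₐ[R] TripleHecke R a b c m :=
  RingQuot.mkAlgHom R (idRel (J R a b m ⊓ J R a c m ⊓ J R b c m))

/-- The element `𝐛 = s₂²s₁ - s₁s₂² - s₂s₁² + s₁²s₂`. -/
def bElt (m : ℕ) : BA R (m+1) :=
  ι (σ 1) ^ 2 * ι (σ 0) - ι (σ 0) * ι (σ 1) ^ 2 - ι (σ 1) * ι (σ 0) ^ 2 + ι (σ 0) ^ 2 * ι (σ 1)

/-- The two-sided ideal of the cubic Hecke algebra generated by `𝐛`. -/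
def bIdeal (a b c : R) (m : ℕ) : TwoSidedIdeal (Hecke R a b c m) :=
  TwoSidedIdeal.span {heckeMk R a b c m (bElt R m)}

/-- The algebra `𝒦_{m+2} = H_{m+2}(a,b,c)/(𝐛)`. -/
abbrev KAlg (a b c : R) (m : ℕ) : Type := QuotI (bIdeal R a b c m)

/-- Canonical projection onto `𝒦_{m+2}`. -/
def kMk (a b c : R) (m : ℕ) : BA R (m+1) →ₐ[R] KAlg R a b c m :=
  (RingQuot.mkAlgHom R (idRel (bIdeal R a b c m))).comp (heckeMk R a b c m)

end general

/-- The Laurent polynomial ring `ℤ[a^{±1}, b^{±1}, c^{±1}]`. -/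
abbrev LR : Type := AddMonoidAlgebra ℤ (Fin 3 →₀ ℤ)

/-- The Laurent variable with index `i` (so `a`, `b`, `c`). -/
def va (i : Fin 3) : LR := AddMonoidAlgebra.single (Finsupp.single i 1) 1

/-- The inverse of the Laurent variable with index `i`. -/
def vaInv (i : Fin 3) : LR := AddMonoidAlgebra.single (-(Finsupp.single i 1)) 1

/-- `r • g` as an element of the group algebra over `LR`. -/
def sg {m : ℕ} (g : BraidGroup m) (r : LR) : BA LR m := MonoidAlgebra.single g r

/-- The element `r₁` of the group algebra of the braid group on `m+2` strands. -/
def r1Elt (m : ℕ) : BA LR (m+2) :=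
  sg ((σ 0)⁻¹ * σ 1 * σ 0) 1 - sg (σ 0 * σ 1 * (σ 0)⁻¹) 1
  + sg (σ 0 * σ 1) (vaInv 0) - sg (σ 0 * (σ 1)⁻¹) (va 0) - sg ((σ 0)⁻¹ * σ 1) (va 0)
  + sg ((σ 0)⁻¹ * (σ 1)⁻¹) (va 0 ^ 3) - sg (σ 1 * σ 0) (vaInv 0) + sg (σ 1 * (σ 0)⁻¹) (va 0)
  + sg ((σ 1)⁻¹ * σ 0) (va 0) - sg ((σ 1)⁻¹ * (σ 0)⁻¹) (va 0 ^ 3)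
  - sg ((σ 0)⁻¹ * (σ 1)⁻¹ * σ 0) (va 0 ^ 2) + sg (σ 0 * (σ 1)⁻¹ * (σ 0)⁻¹) (va 0 ^ 2)

/-- The cubic Hecke algebra `H_{m+2}` over `ℤ[a^{±1},b^{±1},c^{±1}]`. -/
abbrev HLR (m : ℕ) : Type := Hecke LR (va 0) (va 1) (va 2) m

/-- Projection onto `H_{m+2}`. -/
def hMk (m : ℕ) : BA LR (m+1) →ₐ[LR] HLR m := heckeMk LR (va 0) (va 1) (va 2) m

/-- Image of a braid in `H_{m+2}`. -/
def hg {m : ℕ} (g : BraidGroup (m+1)) : HLR m := hMk m (ι g)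

/-- The two-sided ideal of `H_{m+2}` generated by (the image of) `r₁`. -/
def QIdeal (m : ℕ) : TwoSidedIdeal (HLR (m+1)) :=
  TwoSidedIdeal.span {hMk (m+1) (r1Elt m)}

/-- The maximal cubic quotient `Q_{m+3}`, so `Q₃ = QAlg 0`, `Q₄ = QAlg 1`, `Q₅ = QAlg 2`. -/
abbrev QAlg (m : ℕ) : Type := QuotI (QIdeal m)

/-- Projection onto `Q_{m+3}`. -/
def qMk (m : ℕ) : BA LR (m+2) →ₐ[LR] QAlg m :=
  (RingQuot.mkAlgHom LR (idRel (QIdeal m))).comp (hMk (m+1))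

/-- Image of a braid in `Q_{m+3}`. -/
def qg {m : ℕ} (g : BraidGroup (m+2)) : QAlg m := qMk m (ι g)


/-- The scalar `r` viewed inside the group algebra. -/
def algC {m : ℕ} (r : LR) : BA LR m := algebraMap LR (BA LR m) r

/-- `Φ` is the ℤ-algebra endomorphism of `R[B]` semilinear over `a ↦ a⁻¹, b ↦ b⁻¹, c ↦ c⁻¹`
sending each Artin generator `sᵢ` to `sᵢ⁻¹`. -/
def IsPhi {m : ℕ} (Φ : BA LR m →+* BA LR m) : Prop :=
  (∀ i : Fin 3, Φ (algC (va i)) = algC (vaInv i)) ∧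
  (∀ i : Fin 3, Φ (algC (vaInv i)) = algC (va i)) ∧
  (∀ i : Fin m, Φ (ι (σ i)) = ι ((σ i)⁻¹))

/-- `Ψ` is the ℤ-algebra anti-endomorphism of `R[B]` semilinear over
`a ↦ a⁻¹, b ↦ b⁻¹, c ↦ c⁻¹` with `Ψ(g) = g⁻¹` for every braid `g`. -/
def IsPsi {m : ℕ} (Ψ : BA LR m →+* (BA LR m)ᵐᵒᵖ) : Prop :=
  (∀ i : Fin 3, Ψ (algC (va i)) = MulOpposite.op (algC (vaInv i))) ∧
  (∀ i : Fin 3, Ψ (algC (vaInv i)) = MulOpposite.op (algC (va i))) ∧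
  (∀ g : BraidGroup m, Ψ (ι g) = MulOpposite.op (ι g⁻¹))

open MulOpposite

section InverseCubic

variable {R A : Type*} [CommRing R] [Ring A] [Algebra R A]

lemma sub_algebraMap_commute (s : A) (x y : R) :
    Commute (s - algebraMap R A x) (s - algebraMap R A y) :=
  ((Commute.refl s).sub_right (Algebra.commute_algebraMap_right y s)).sub_left
    ((Algebra.commute_algebraMap_left x s).sub_right (Algebra.commute_algebraMap_left x _))

open scoped IsMulCommutative in
lemma inv_sub_mul_inv_sub_mul_inv_sub {s s' : A} (hs : s * s' = 1) (hs' : s' * s = 1)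
    {x y z x' y' z' : R} (hx : x * x' = 1) (hy : y * y' = 1) (hz : z * z' = 1) :
    (s' - algebraMap R A x') * (s' - algebraMap R A y') * (s' - algebraMap R A z') =
      -(algebraMap R A (x' * y' * z') * s' ^ 3) *
        ((s - algebraMap R A x) * (s - algebraMap R A y) * (s - algebraMap R A z)) := by
  have : IsMulCommutative (Algebra.adjoin R {s, s'}) := Algebra.isMulCommutative_adjoin R (by
    simp only [Set.mem_insert_iff, Set.mem_singleton_iff]
    rintro a (rfl | rfl) b (rfl | rfl) <;> simp only [hs, hs'])
  set T : Algebra.adjoin R {s, s'} := ⟨s, Algebra.subset_adjoin (by simp)⟩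
  set T' : Algebra.adjoin R {s, s'} := ⟨s', Algebra.subset_adjoin (by simp)⟩
  have hT : T * T' = 1 := Subtype.ext hs
  have key : ∀ {u u' : R}, u * u' = 1 →
      T' - algebraMap R _ u' = T' * algebraMap R _ u' * (algebraMap R _ u - T) := by
    intro u u' hu
    have hu' : algebraMap R (Algebra.adjoin R {s, s'}) u * algebraMap R _ u' = 1 := by
      rw [← map_mul, hu, map_one]
    linear_combination (-T') * hu' + algebraMap R _ u' * hT
  have h := congrArg Subtype.val <| show
      (T' - algebraMap R _ x') * (T' - algebraMap R _ y') * (T' - algebraMap R _ z') =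
      -(algebraMap R _ (x' * y' * z') * T' ^ 3) *
        ((T - algebraMap R _ x) * (T - algebraMap R _ y) * (T - algebraMap R _ z)) by
    rw [key hx, key hy, key hz, map_mul, map_mul]; ring
  simpa using h

end InverseCubic

lemma LR.ringHom_ext {S : Type*} [Semiring S] {f g : LR →+* S} (h : ∀ i, f (va i) = g (va i)) :
    f = g :=
  AddMonoidAlgebra.ringHom_ext' (RingHom.ext_int _ _) <|
    AddMonoidHom.toMultiplicativeLeft.symm.injective <|
      Finsupp.addHom_ext' fun i => AddMonoidHom.ext_int (h i)

/-- The ring automorphism `a ↦ a⁻¹, b ↦ b⁻¹, c ↦ c⁻¹` of `LR`. -/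
def tau : LR →+* LR := AddMonoidAlgebra.mapDomainRingHom ℤ negAddMonoidHom

lemma tau_single (x : Fin 3 →₀ ℤ) (n : ℤ) :
    tau (AddMonoidAlgebra.single x n) = AddMonoidAlgebra.single (-x) n := by
  simp [tau]

lemma tau_va (i : Fin 3) : tau (va i) = vaInv i := tau_single _ _

lemma tau_tau (r : LR) : tau (tau r) = r :=
  RingHom.congr_fun (LR.ringHom_ext (f := tau.comp tau) (g := RingHom.id LR) fun i => by
    rw [RingHom.comp_apply, tau_va, vaInv, tau_single, neg_neg, RingHom.id_apply, va]) r

lemma tau_vaInv (i : Fin 3) : tau (vaInv i) = va i := by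
  rw [← tau_va, tau_tau]

lemma va_mul_vaInv (i : Fin 3) : va i * vaInv i = 1 := by
  simp [va, vaInv, AddMonoidAlgebra.single_mul_single, AddMonoidAlgebra.one_def]

def la (k : ℤ) : LR := AddMonoidAlgebra.single (Finsupp.single 0 k) 1

lemma la_add (j k : ℤ) : la (j + k) = la j * la k := by
  simp [la, AddMonoidAlgebra.single_mul_single, Finsupp.single_add]

lemma la_zero : la 0 = 1 := by
  simp [la, AddMonoidAlgebra.one_def]

lemma va_zero_eq_la : va 0 = la 1 := rfl

lemma vaInv_zero_eq_la : vaInv 0 = la (-1) := by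
  rw [vaInv, la, Finsupp.single_neg]

lemma la_pow (k : ℤ) (n : ℕ) : la k ^ n = la (n * k) := by
  induction n with
  | zero => rw [pow_zero, Nat.cast_zero, zero_mul, la_zero]
  | succ n ih => rw [pow_succ, ih, ← la_add, Nat.cast_succ, add_one_mul]

lemma tau_la (k : ℤ) : tau (la k) = la (-k) := by
  rw [la, tau_single, la, Finsupp.single_neg]

lemma σ_braid {m : ℕ} {i j : Fin m} (h : (i : ℕ) + 1 = j) :
    σ i * σ j * σ i = σ j * σ i * σ j :=
  mul_inv_eq_one.mp <| PresentedGroup.one_of_mem (Or.inl ⟨i, j, h, rfl⟩)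

lemma σ_comm {m : ℕ} {i j : Fin m} (h : (i : ℕ) + 2 ≤ j) : σ i * σ j = σ j * σ i :=
  mul_inv_eq_one.mp <| PresentedGroup.one_of_mem (Or.inr ⟨i, j, h, rfl⟩)

def braidInv (m : ℕ) : BraidGroup m →* BraidGroup m :=
  PresentedGroup.toGroup (f := fun i => (σ i)⁻¹) <| by
    rintro r (⟨i, j, hij, rfl⟩ | ⟨i, j, hij, rfl⟩) <;>
      simp only [map_mul, map_inv, FreeGroup.lift_apply_of, ← mul_inv_rev, inv_inv,
        inv_mul_eq_one]
    · simpa only [mul_assoc] using σ_braid hij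
    · exact (σ_comm hij).symm

@[simp] lemma braidInv_σ {m : ℕ} (i : Fin m) : braidInv m (σ i) = (σ i)⁻¹ :=
  PresentedGroup.toGroup.of _

lemma braidInv_braidInv {m : ℕ} (g : BraidGroup m) : braidInv m (braidInv m g) = g :=
  DFunLike.congr_fun (PresentedGroup.ext (φ := (braidInv m).comp (braidInv m)) (ψ := .id _)
    fun i => show braidInv m (braidInv m (σ i)) = σ i by
      rw [braidInv_σ, map_inv, braidInv_σ, inv_inv]) g

section GroupAlgebra

variable {m : ℕ}

lemma ι_mul_ι_inv {R : Type} [CommRing R] (g : BraidGroup m) : (ι g : BA R m) * ι g⁻¹ = 1 :=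
  map_mul_eq_one _ (mul_inv_cancel g)

lemma ι_inv_mul_ι {R : Type} [CommRing R] (g : BraidGroup m) : (ι g⁻¹ : BA R m) * ι g = 1 :=
  map_mul_eq_one _ (inv_mul_cancel g)

lemma sg_eq_algebraMap_mul_ι (g : BraidGroup m) (r : LR) :
    sg g r = algebraMap LR (BA LR m) r * ι g := by
  simp [sg, ι, MonoidAlgebra.coe_algebraMap, MonoidAlgebra.single_mul_single]

lemma smul_sg (c : LR) (g : BraidGroup m) (r : LR) : c • sg g r = sg g (c * r) :=
  MonoidAlgebra.smul_single' c g r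

lemma IsPhi.map_algebraMap {Φ : BA LR m →+* BA LR m} (hΦ : IsPhi Φ) (r : LR) :
    Φ (algebraMap LR _ r) = algebraMap LR _ (tau r) :=
  RingHom.congr_fun (LR.ringHom_ext (f := Φ.comp (algebraMap LR _))
    (g := (algebraMap LR _).comp tau) fun i => by
      rw [RingHom.comp_apply, RingHom.comp_apply, tau_va]; exact hΦ.1 i) r

lemma IsPhi.map_ι {Φ : BA LR m →+* BA LR m} (hΦ : IsPhi Φ) (g : BraidGroup m) :
    Φ (ι g) = ι (braidInv m g) := by
  have := PresentedGroup.ext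
    (φ := ((Φ : BA LR m →* BA LR m).comp (MonoidAlgebra.of LR _)).toHomUnits)
    (ψ := ((MonoidAlgebra.of LR _).comp (braidInv m)).toHomUnits) fun i =>
      Units.ext <| (hΦ.2.2 i).trans (congrArg ι (braidInv_σ i).symm)
  exact congrArg Units.val (DFunLike.congr_fun this g)

lemma IsPhi.map_sg {Φ : BA LR m →+* BA LR m} (hΦ : IsPhi Φ) (g : BraidGroup m) (r : LR) :
    Φ (sg g r) = sg (braidInv m g) (tau r) := by
  rw [sg_eq_algebraMap_mul_ι, map_mul, hΦ.map_algebraMap, hΦ.map_ι, sg_eq_algebraMap_mul_ι]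

lemma IsPsi.map_algebraMap {Ψ : BA LR m →+* (BA LR m)ᵐᵒᵖ} (hΨ : IsPsi Ψ) (r : LR) :
    Ψ (algebraMap LR _ r) = op (algebraMap LR _ (tau r)) :=
  RingHom.congr_fun (LR.ringHom_ext (f := Ψ.comp (algebraMap LR _))
    (g := (algebraMap LR (BA LR m)ᵐᵒᵖ).comp tau) fun i => by
      rw [RingHom.comp_apply, RingHom.comp_apply, tau_va]; exact hΨ.1 i) r

lemma IsPsi.map_sg {Ψ : BA LR m →+* (BA LR m)ᵐᵒᵖ} (hΨ : IsPsi Ψ) (g : BraidGroup m)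
    (r : LR) :
    Ψ (sg g r) = op (sg g⁻¹ (tau r)) := by
  rw [sg_eq_algebraMap_mul_ι, map_mul, hΨ.map_algebraMap, hΨ.2.2, ← op_mul,
    ← Algebra.commutes, sg_eq_algebraMap_mul_ι]

end GroupAlgebra

section Existence

variable (m : ℕ)

def phiHom : BA LR m →+* BA LR m :=
  (MonoidAlgebra.mapDomainRingHom LR (braidInv m)).comp (MonoidAlgebra.mapRingHom _ tau)

def psiHom : BA LR m →+* (BA LR m)ᵐᵒᵖ :=
  MonoidAlgebra.opRingEquiv.symm.toRingHom.comp <|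
    (MonoidAlgebra.mapDomainRingHom LRᵐᵒᵖ (MulEquiv.inv' (BraidGroup m)).toMonoidHom).comp
      (MonoidAlgebra.mapRingHom _ ((RingEquiv.toOpposite LR).toRingHom.comp tau))

variable {m}

lemma phiHom_single (g : BraidGroup m) (r : LR) :
    phiHom m (MonoidAlgebra.single g r) = MonoidAlgebra.single (braidInv m g) (tau r) := by
  simp [phiHom]

lemma psiHom_single (g : BraidGroup m) (r : LR) :
    psiHom m (MonoidAlgebra.single g r) = op (MonoidAlgebra.single g⁻¹ (tau r)) := by
  simp [psiHom]

lemma isPhi_phiHom : IsPhi (phiHom m) := by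
  refine ⟨fun i => ?_, fun i => ?_, fun i => ?_⟩ <;>
    simp [algC, ι, MonoidAlgebra.coe_algebraMap, phiHom_single, tau_va, tau_vaInv]

lemma isPsi_psiHom : IsPsi (psiHom m) := by
  refine ⟨fun i => ?_, fun i => ?_, fun i => ?_⟩ <;>
    simp [algC, ι, MonoidAlgebra.coe_algebraMap, psiHom_single, tau_va, tau_vaInv]

end Existence

section R1

variable {m : ℕ}

lemma IsPhi.map_r1Elt {Φ : BA LR (m+2) →+* BA LR (m+2)} (hΦ : IsPhi Φ) :
    Φ (r1Elt m) = vaInv 0 ^ 2 • r1Elt m := by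
  simp only [r1Elt, map_add, map_sub, hΦ.map_sg, map_mul, map_inv, braidInv_σ, inv_inv,
    smul_add, smul_sub, smul_sg, map_one, mul_one, va_zero_eq_la, vaInv_zero_eq_la, la_pow,
    tau_la, ← la_add, Nat.cast_ofNat, Int.reduceMul, Int.reduceAdd, Int.reduceNeg, la_zero]
  abel

lemma IsPsi.unop_map_r1Elt {Ψ : BA LR (m+2) →+* (BA LR (m+2))ᵐᵒᵖ} (hΨ : IsPsi Ψ) :
    (Ψ (r1Elt m)).unop = -(vaInv 0 ^ 2 • r1Elt m) := by
  simp only [r1Elt, map_add, map_sub, hΨ.map_sg, unop_add, unop_sub, unop_op, mul_inv_rev,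
    inv_inv, mul_assoc, smul_add, smul_sub, smul_sg, map_one, mul_one, va_zero_eq_la,
    vaInv_zero_eq_la, la_pow, tau_la, ← la_add, Nat.cast_ofNat, Int.reduceMul, Int.reduceAdd,
    Int.reduceNeg, la_zero]
  abel

end R1

section Involutions

variable {m : ℕ} {Φ : BA LR m →+* BA LR m} {Ψ : BA LR m →+* (BA LR m)ᵐᵒᵖ}

lemma IsPhi.map_map (hΦ : IsPhi Φ) (u : BA LR m) : Φ (Φ u) = u := by
  induction u using MonoidAlgebra.induction_linear with
  | zero => simp only [map_zero]
  | add u v hu hv => simp only [map_add, hu, hv]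
  | single g r => rw [← sg, hΦ.map_sg, hΦ.map_sg, braidInv_braidInv, tau_tau]

lemma IsPsi.unop_map_unop_map (hΨ : IsPsi Ψ) (u : BA LR m) : (Ψ (Ψ u).unop).unop = u := by
  induction u using MonoidAlgebra.induction_linear with
  | zero => simp only [map_zero, unop_zero]
  | add u v hu hv => simp only [map_add, unop_add, hu, hv]
  | single g r => rw [← sg, hΨ.map_sg, unop_op, hΨ.map_sg, unop_op, inv_inv, tau_tau]

lemma IsPhi.map_unop_comm (hΦ : IsPhi Φ) (hΨ : IsPsi Ψ) (u : BA LR m) :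
    Φ (Ψ u).unop = (Ψ (Φ u)).unop := by
  induction u using MonoidAlgebra.induction_linear with
  | zero => simp only [map_zero, unop_zero]
  | add u v hu hv => simp only [map_add, unop_add, hu, hv]
  | single g r =>
    rw [← sg, hΨ.map_sg, unop_op, hΦ.map_sg, hΦ.map_sg, hΨ.map_sg, unop_op, map_inv]

end Involutions

section Quotient

variable {m : ℕ}

lemma IsPhi.map_cubicElt {Φ : BA LR (m+2) →+* BA LR (m+2)} (hΦ : IsPhi Φ) :
    Φ (cubicElt LR (va 0) (va 1) (va 2) (m+1)) =
      -(algebraMap LR _ (vaInv 0 * vaInv 1 * vaInv 2) * ι (σ 0)⁻¹ ^ 3) *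
        cubicElt LR (va 0) (va 1) (va 2) (m+1) := by
  simp only [cubicElt, map_mul Φ, map_sub Φ, hΦ.2.2, hΦ.map_algebraMap, tau_va]
  exact inv_sub_mul_inv_sub_mul_inv_sub (ι_mul_ι_inv _) (ι_inv_mul_ι _) (va_mul_vaInv 0)
    (va_mul_vaInv 1) (va_mul_vaInv 2)

lemma IsPsi.unop_map_cubicElt {Ψ : BA LR (m+2) →+* (BA LR (m+2))ᵐᵒᵖ} (hΨ : IsPsi Ψ) :
    (Ψ (cubicElt LR (va 0) (va 1) (va 2) (m+1))).unop =
      -(algebraMap LR _ (vaInv 0 * vaInv 1 * vaInv 2) * ι (σ 0)⁻¹ ^ 3) *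
        cubicElt LR (va 0) (va 1) (va 2) (m+1) := by
  simp only [cubicElt, map_mul Ψ, map_sub Ψ, hΨ.2.2, hΨ.map_algebraMap, tau_va, unop_mul,
    unop_sub, unop_op]
  -- the three factors are polynomials in `σ₀⁻¹`, so they commute
  rw [← (sub_algebraMap_commute _ _ _).eq,
    ← ((sub_algebraMap_commute _ _ _).mul_left (sub_algebraMap_commute _ _ _)).eq]
  exact inv_sub_mul_inv_sub_mul_inv_sub (ι_mul_ι_inv _) (ι_inv_mul_ι _) (va_mul_vaInv 0)
    (va_mul_vaInv 1) (va_mul_vaInv 2)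

lemma mkAlgHom_span_singleton_self {R A : Type} [CommRing R] [Ring A] [Algebra R A] (g : A) :
    RingQuot.mkAlgHom R (idRel (TwoSidedIdeal.span ({g} : Set A))) g = 0 := by
  rw [← map_zero (RingQuot.mkAlgHom R (idRel (TwoSidedIdeal.span ({g} : Set A))))]
  exact RingQuot.mkAlgHom_rel R (by rw [idRel, sub_zero]; exact TwoSidedIdeal.subset_span rfl)

lemma qMk_cubicElt : qMk m (cubicElt LR (va 0) (va 1) (va 2) (m+1)) = 0 := by
  rw [qMk, AlgHom.comp_apply, hMk, heckeMk]
  exact (congrArg _ (mkAlgHom_span_singleton_self _)).trans (map_zero _)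

lemma qMk_r1Elt : qMk m (r1Elt m) = 0 :=
  mkAlgHom_span_singleton_self _

lemma qMk_surjective : Function.Surjective (qMk m) :=
  (RingQuot.mkAlgHom_surjective _ _).comp (RingQuot.mkAlgHom_surjective _ _)

lemma apply_eq_of_idRel_span_singleton {A B : Type} [Ring A] [Ring B] (f : A →+* B) {g : A}
    (hg : f g = 0) {x y : A} (h : idRel (TwoSidedIdeal.span ({g} : Set A)) x y) :
    f x = f y := by
  have : x - y ∈ TwoSidedIdeal.ker f := TwoSidedIdeal.mem_span_iff.mp h _ <|
    Set.singleton_subset_iff.mpr ((TwoSidedIdeal.mem_ker f).mpr hg)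
  rwa [TwoSidedIdeal.mem_ker, map_sub, sub_eq_zero] at this

lemma lift_mkAlgHom_apply {R A B : Type} [CommRing R] [Ring A] [Algebra R A] [Ring B]
    {r : A → A → Prop} (f : A →+* B) (hf : ∀ ⦃x y⦄, r x y → f x = f y) (x : A) :
    RingQuot.lift ⟨f, hf⟩ (RingQuot.mkAlgHom R r x) = f x := by
  rw [← RingQuot.lift_mkRingHom_apply f hf x, ← RingQuot.mkAlgHom_coe R]
  rfl

def QAlg.lift {S : Type} [Ring S] (F : BA LR (m+2) →+* S)
    (hcubic : F (cubicElt LR (va 0) (va 1) (va 2) (m+1)) = 0) (hr1 : F (r1Elt m) = 0) :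
    QAlg m →+* S :=
  let F' : HLR (m+1) →+* S :=
    RingQuot.lift ⟨F, fun _ _ => apply_eq_of_idRel_span_singleton F hcubic⟩
  RingQuot.lift ⟨F', fun _ _ => apply_eq_of_idRel_span_singleton F' (g := hMk (m+1) (r1Elt m))
    ((lift_mkAlgHom_apply (R := LR) F _ (r1Elt m)).trans hr1)⟩

lemma QAlg.lift_qMk {S : Type} [Ring S] (F : BA LR (m+2) →+* S)
    (hcubic : F (cubicElt LR (va 0) (va 1) (va 2) (m+1)) = 0) (hr1 : F (r1Elt m) = 0)
    (u : BA LR (m+2)) : QAlg.lift F hcubic hr1 (qMk m u) = F u :=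
  (lift_mkAlgHom_apply (R := LR) _ _ _).trans (lift_mkAlgHom_apply (R := LR) F _ u)

end Quotient

def ringEquivOpOfInvolutive {A : Type*} [Semiring A] (f : A →+* Aᵐᵒᵖ)
    (hf : ∀ x, (f (f x).unop).unop = x) : A ≃+* Aᵐᵒᵖ :=
  { f with
    invFun := fun y => (f y.unop).unop
    left_inv := hf
    right_inv := fun y => unop_injective (hf y.unop) }

section QuotientMaps

variable {m : ℕ} {Φ : BA LR (m+2) →+* BA LR (m+2)}
  {Ψ : BA LR (m+2) →+* (BA LR (m+2))ᵐᵒᵖ}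

def IsPhi.quotHom (hΦ : IsPhi Φ) : QAlg m →+* QAlg m :=
  QAlg.lift ((qMk m : BA LR (m+2) →+* QAlg m).comp Φ)
    (by rw [RingHom.comp_apply, hΦ.map_cubicElt, map_mul, AlgHom.coe_toRingHom, qMk_cubicElt,
      mul_zero])
    (by rw [RingHom.comp_apply, hΦ.map_r1Elt, AlgHom.coe_toRingHom, map_smul, qMk_r1Elt,
      smul_zero])

lemma IsPhi.quotHom_qMk (hΦ : IsPhi Φ) (u : BA LR (m+2)) :
    hΦ.quotHom (qMk m u) = qMk m (Φ u) :=
  QAlg.lift_qMk _ _ _ u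

lemma IsPhi.quotHom_quotHom (hΦ : IsPhi Φ) (x : QAlg m) : hΦ.quotHom (hΦ.quotHom x) = x := by
  obtain ⟨u, rfl⟩ := qMk_surjective x
  rw [hΦ.quotHom_qMk, hΦ.quotHom_qMk, hΦ.map_map]

def IsPhi.quotEquiv (hΦ : IsPhi Φ) : QAlg m ≃+* QAlg m :=
  .ofRingHom hΦ.quotHom hΦ.quotHom (RingHom.ext hΦ.quotHom_quotHom)
    (RingHom.ext hΦ.quotHom_quotHom)

def IsPsi.quotHom (hΨ : IsPsi Ψ) : QAlg m →+* (QAlg m)ᵐᵒᵖ :=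
  QAlg.lift ((RingHom.op (qMk m : BA LR (m+2) →+* QAlg m)).comp Ψ)
    (by simp only [RingHom.comp_apply, RingHom.op_apply_apply, hΨ.unop_map_cubicElt, map_mul,
      AlgHom.coe_toRingHom, qMk_cubicElt, mul_zero, op_zero])
    (by simp only [RingHom.comp_apply, RingHom.op_apply_apply, hΨ.unop_map_r1Elt, map_neg,
      AlgHom.coe_toRingHom, map_smul, qMk_r1Elt, smul_zero, neg_zero, op_zero])

lemma IsPsi.quotHom_qMk (hΨ : IsPsi Ψ) (u : BA LR (m+2)) :
    hΨ.quotHom (qMk m u) = op (qMk m (Ψ u).unop) :=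
  QAlg.lift_qMk _ _ _ u

lemma IsPsi.unop_quotHom_unop_quotHom (hΨ : IsPsi Ψ) (x : QAlg m) :
    (hΨ.quotHom (hΨ.quotHom x).unop).unop = x := by
  obtain ⟨u, rfl⟩ := qMk_surjective x
  rw [hΨ.quotHom_qMk, unop_op, hΨ.quotHom_qMk, unop_op, hΨ.unop_map_unop_map]

def IsPsi.quotEquiv (hΨ : IsPsi Ψ) : QAlg m ≃+* (QAlg m)ᵐᵒᵖ :=
  ringEquivOpOfInvolutive hΨ.quotHom hΨ.unop_quotHom_unop_quotHom

end QuotientMaps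

/-- `Φ` and `Ψ` exist; in `H₃` one has `Φ(r₁) = a⁻² r₁` and
`Ψ(r₁) = -a⁻² r₁`; consequently, for every `n ≥ 3` (here `n = m+3`), `Φ` induces a
ℤ-algebra automorphism `φ` of `Qₙ`, `Ψ` induces a ℤ-algebra anti-automorphism `ψ` of `Qₙ`,
and `φ∘ψ = ψ∘φ` is an `R`-algebra anti-automorphism of `Qₙ` fixing each `sᵢ`. -/
theorem statement3 :
    (∃ Φ : BA LR 2 →+* BA LR 2, IsPhi Φ) ∧
    (∃ Ψ : BA LR 2 →+* (BA LR 2)ᵐᵒᵖ, IsPsi Ψ) ∧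
    (∀ Φ : BA LR 2 →+* BA LR 2, IsPhi Φ →
      hMk 1 (Φ (r1Elt 0)) = hMk 1 ((vaInv 0 ^ 2) • r1Elt 0)) ∧
    (∀ Ψ : BA LR 2 →+* (BA LR 2)ᵐᵒᵖ, IsPsi Ψ →
      hMk 1 ((Ψ (r1Elt 0)).unop) = hMk 1 (-((vaInv 0 ^ 2) • r1Elt 0))) ∧
    (∀ m : ℕ,
      (∀ Φ : BA LR (m+2) →+* BA LR (m+2), IsPhi Φ →
        ∃ φ : QAlg m ≃+* QAlg m, ∀ x : BA LR (m+2), φ (qMk m x) = qMk m (Φ x)) ∧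
      (∀ Ψ : BA LR (m+2) →+* (BA LR (m+2))ᵐᵒᵖ, IsPsi Ψ →
        ∃ ψ : QAlg m ≃+* (QAlg m)ᵐᵒᵖ, ∀ x : BA LR (m+2),
          ψ (qMk m x) = MulOpposite.op (qMk m ((Ψ x).unop))) ∧
      (∀ (φ : QAlg m ≃+* QAlg m) (ψ : QAlg m ≃+* (QAlg m)ᵐᵒᵖ),
        (∃ Φ : BA LR (m+2) →+* BA LR (m+2), IsPhi Φ ∧
          ∀ x : BA LR (m+2), φ (qMk m x) = qMk m (Φ x)) →
        (∃ Ψ : BA LR (m+2) →+* (BA LR (m+2))ᵐᵒᵖ, IsPsi Ψ ∧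
          ∀ x : BA LR (m+2), ψ (qMk m x) = MulOpposite.op (qMk m ((Ψ x).unop))) →
        (∀ x : QAlg m, MulOpposite.op (φ (ψ x).unop) = ψ (φ x)) ∧
        (∀ r : LR, ψ (φ (algebraMap LR (QAlg m) r)) =
          MulOpposite.op (algebraMap LR (QAlg m) r)) ∧
        (∀ i : Fin (m+2), ψ (φ (qg (σ i))) = MulOpposite.op (qg (σ i))))) := by
  refine ⟨⟨phiHom 2, isPhi_phiHom⟩, ⟨psiHom 2, isPsi_psiHom⟩,
    fun Φ hΦ => congrArg (hMk 1) hΦ.map_r1Elt, fun Ψ hΨ => congrArg (hMk 1) hΨ.unop_map_r1Elt,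
    fun m => ⟨fun Φ hΦ => ⟨hΦ.quotEquiv, hΦ.quotHom_qMk⟩,
      fun Ψ hΨ => ⟨hΨ.quotEquiv, hΨ.quotHom_qMk⟩, ?_⟩⟩
  rintro φ ψ ⟨Φ, hΦ, hφ⟩ ⟨Ψ, hΨ, hψ⟩
  refine ⟨fun x => ?_, fun r => ?_, fun i => ?_⟩
  · obtain ⟨u, rfl⟩ := qMk_surjective x
    rw [hψ, unop_op, hφ, hφ, hψ, hΦ.map_unop_comm hΨ]
  · rw [← AlgHom.commutes (qMk m), hφ, hψ, hΦ.map_algebraMap, hΨ.map_algebraMap, tau_tau,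
      unop_op]
  · rw [qg, hφ, hΦ.2.2, hψ, hΨ.2.2, inv_inv, unop_op]

end Cubic
end
end

section
/- Let R be an integral domain and a, b, c ∈ R^× with (a−b)(a−c)(b−c) ∈ R^×, and set Σ₁ = a+b+c, Σ₂ = ab+bc+ac, Σ₃ = abc. Then inside ℋ_3 the following equalities hold: (1) (s_i − a)(s_i − b)(s_i − c) = 0 for i ∈ {1,2}; (2) s_2² s_1 − s_1 s_2² = s_2 s_1² − s_1² s_2; (3) s_2 s_1² s_2 = −Σ₃ s_1 + Σ₂ s_1 s_2 + s_1 s_2 s_1² − Σ₁ s_1 s_2² + s_1² s_2². And inside ℋ_4 the following equalities hold: (4) s_2 s_3² = −s_1² s_3 + s_1² s_2 + s_2² s_3 − s_1 s_2² + s_1 s_3²; (5) s_2² s_3 s_1 = s_2 s_1² s_3 − s_1² s_2 s_3 + s_1 s_2² s_3; (6) s_2² s_3² = −Σ₃ s_1 + Σ₂ s_1 s_3 − Σ₁ s_1² s_3 + Σ₃ s_2 − Σ₂ s_2 s_3 + Σ₁ s_1² s_2 − s_1² s_2 s_3 + Σ₁ s_2² s_3 − Σ₁ s_1 s_2² + s_1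 s_2² s_3 + s_1² s_3²; (7) s_2² s_3² = −Σ₃ s_1 + Σ₂ s_1 s_3 − Σ₁ s_1² s_3 + Σ₃ s_2 − Σ₂ s_2 s_3 + Σ₁ s_1² s_2 + Σ₁ s_2² s_3 − Σ₁ s_1 s_2² + s_1² s_3² + s_2² s_1 s_3 − s_2 s_1² s_3. -/
/-!
`ℋ_n` is a subdirect product of the three Iwahori–Hecke algebras `H_n(a,b)`, `H_n(a,c)`,
`H_n(b,c)`: an identity holds in `ℋ_n` as soon as it holds in each of them. Since all Artin
generators are conjugate in `B_n`, each one satisfies the quadratic relation of `H_n(x,y)`, and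
hence the cubic relation `(s - a)(s - b)(s - c) = 0` in `ℋ_n`.

Identities (2), (4), (5) and the `Σ`-free identities
`s₂ s₁² s₂ = -s₁ s₂³ + s₁ s₂ s₁² + s₁² s₂²` and
`s₂² s₃² = (s₂ - s₁) s₃³ - s₁² s₂ s₃ + s₁ s₂² s₃ + s₁² s₃²`
hold for any elements satisfying one common quadratic relation (and the braid, resp. commutation,
relation where needed), whatever its coefficients; so they hold in each `H_n(x,y)` and thus in
`ℋ_n`. Eliminating the cubes with the cubic relation turns the last two into (3) and (6), and (7)
is (6) combined with (5).
-/

noncomputable section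
open scoped Classical Pointwise

namespace Cubic

section BraidGroup
variable {m : ℕ}

theorem σ_mul_σ_mul_σ {i j : Fin m} (h : (i : ℕ) + 1 = j) :
    σ i * σ j * σ i = σ j * σ i * σ j :=
  PresentedGroup.mk_eq_mk_of_mul_inv_mem (Or.inl ⟨i, j, h, rfl⟩)

theorem σ_mul_σ_comm {i j : Fin m} (h : (i : ℕ) + 2 ≤ j) : σ i * σ j = σ j * σ i :=
  PresentedGroup.mk_eq_mk_of_mul_inv_mem (Or.inr ⟨i, j, h, rfl⟩)

theorem exists_σ_eq_conj_σ_zero (j : Fin (m + 1)) :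
    ∃ w : BraidGroup (m + 1), σ j = w * σ 0 * w⁻¹ := by
  obtain ⟨j, hj⟩ := j
  induction j with
  | zero => exact ⟨1, by simp⟩
  | succ k ih =>
    obtain ⟨w, hw⟩ := ih (by omega)
    refine ⟨σ ⟨k, by omega⟩ * σ ⟨k + 1, hj⟩ * w, ?_⟩
    have hbraid := σ_mul_σ_mul_σ (m := m + 1) (i := ⟨k, by omega⟩) (j := ⟨k + 1, hj⟩) rfl
    set x := σ (⟨k, by omega⟩ : Fin (m + 1))
    set y := σ (⟨k + 1, hj⟩ : Fin (m + 1))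
    calc y = x * y * x * (x * y)⁻¹ := by rw [hbraid]; group
      _ = x * y * w * σ 0 * (x * y * w)⁻¹ := by rw [hw]; group

end BraidGroup

section Quotient
variable {S A : Type} [CommSemiring S] [Ring A] [Algebra S A] {I : TwoSidedIdeal A}

theorem mkAlgHom_idRel_eq_iff {u v : A} :
    RingQuot.mkAlgHom S (idRel I) u = RingQuot.mkAlgHom S (idRel I) v ↔ u - v ∈ I := by
  refine ⟨fun h => ?_, fun h => RingQuot.mkAlgHom_rel S h⟩
  have hlift : ∀ ⦃p q : A⦄, idRel I p q → I.ringCon.mk' p = I.ringCon.mk' q :=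
    fun p q hpq => (RingCon.eq _).mpr ((I.rel_iff p q).mpr hpq)
  have h' := congrArg (RingQuot.lift ⟨I.ringCon.mk', hlift⟩) h
  have hcoe (x : A) : RingQuot.mkAlgHom S (idRel I) x = RingQuot.mkRingHom (idRel I) x :=
    DFunLike.congr_fun (RingQuot.mkAlgHom_coe S _) x
  rw [hcoe, hcoe, RingQuot.lift_mkRingHom_apply, RingQuot.lift_mkRingHom_apply] at h'
  exact (I.rel_iff u v).mp ((RingCon.eq _).mp h')

theorem mkAlgHom_idRel_eq_zero {u : A} (h : u ∈ I) : RingQuot.mkAlgHom S (idRel I) u = 0 :=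
  (mkAlgHom_idRel_eq_iff.mpr (by rwa [sub_zero])).trans (map_zero _)

end Quotient

section QuadraticRelation
variable {R T : Type} [CommRing R] [Ring T] [Algebra R T] {e f : R} {A B C : T}

theorem mul_self_eq_of_quadratic {x y : R}
    (h : (A - algebraMap R T x) * (A - algebraMap R T y) = 0) :
    A * A = (x + y) • A - (x * y) • 1 := by
  rw [← sub_eq_zero, ← h]
  simp only [Algebra.algebraMap_eq_smul_one, mul_sub, sub_mul, smul_mul_assoc, mul_smul_comm,
    one_mul, mul_one]
  module

theorem sq_mul_sub_mul_sq_of_quadratic (hA : A * A = e • A - f • 1)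
    (hB : B * B = e • B - f • 1) : B ^ 2 * A - A * B ^ 2 = B * A ^ 2 - A ^ 2 * B := by
  simp only [sq, hA, hB, mul_sub, sub_mul, smul_mul_assoc, mul_smul_comm, one_mul, mul_one]
  module

theorem mul_sq_mul_of_quadratic_of_braid (hA : A * A = e • A - f • 1)
    (hB : B * B = e • B - f • 1) (hAB : B * A * B = A * B * A) :
    B * A ^ 2 * B = -(A * B ^ 3) + A * B * A ^ 2 + A ^ 2 * B ^ 2 := by
  have hAB' : B * (A * B) = A * (B * A) := by simpa only [mul_assoc] using hAB
  simp only [pow_succ, pow_zero, one_mul, mul_assoc, hA, hB, hAB', mul_sub, sub_mul,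
    smul_mul_assoc, mul_smul_comm, mul_one, smul_sub, smul_smul]
  module

theorem mul_sq_eq_of_quadratic (hA : A * A = e • A - f • 1) (hB : B * B = e • B - f • 1)
    (hC : C * C = e • C - f • 1) :
    B * C ^ 2 = -(A ^ 2 * C) + A ^ 2 * B + B ^ 2 * C - A * B ^ 2 + A * C ^ 2 := by
  simp only [sq, hA, hB, hC, mul_sub, sub_mul, smul_mul_assoc, mul_smul_comm, one_mul, mul_one]
  module

theorem sq_mul_mul_of_quadratic_of_commute (hA : A * A = e • A - f • 1)
    (hB : B * B = e • B - f • 1) (hAC : Commute A C) :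
    B ^ 2 * C * A = B * A ^ 2 * C - A ^ 2 * B * C + A * B ^ 2 * C := by
  simp only [sq, hA, hB, mul_assoc, hAC.eq, mul_sub, sub_mul, smul_mul_assoc, mul_smul_comm,
    one_mul, mul_one]
  module

theorem sq_mul_sq_of_quadratic (hA : A * A = e • A - f • 1) (hB : B * B = e • B - f • 1)
    (hC : C * C = e • C - f • 1) :
    B ^ 2 * C ^ 2 = B * C ^ 3 - A * C ^ 3 - A ^ 2 * B * C + A * B ^ 2 * C + A ^ 2 * C ^ 2 := by
  simp only [pow_succ, pow_zero, one_mul, mul_assoc, hA, hB, hC, mul_sub, sub_mul,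
    smul_mul_assoc, mul_smul_comm, mul_one, smul_sub, smul_smul]
  module

end QuadraticRelation

section CubicRelation
variable {R T : Type} [CommRing R] [Ring T] [Algebra R T] {x y z : R} {A B C : T}

theorem pow_three_of_cubic
    (h : (A - algebraMap R T x) * (A - algebraMap R T y) * (A - algebraMap R T z) = 0) :
    A ^ 3 = algebraMap R T (x + y + z) * A ^ 2 - algebraMap R T (x * y + y * z + x * z) * A
      + algebraMap R T (x * y * z) := by
  rw [← sub_eq_zero, ← h]
  simp only [Algebra.algebraMap_eq_smul_one, pow_succ, pow_zero, one_mul, mul_sub, sub_mul,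
    smul_mul_assoc, mul_smul_comm, mul_one]
  module

theorem mul_sq_mul_of_cubic
    (hB : (B - algebraMap R T x) * (B - algebraMap R T y) * (B - algebraMap R T z) = 0)
    (h : B * A ^ 2 * B = -(A * B ^ 3) + A * B * A ^ 2 + A ^ 2 * B ^ 2) :
    B * A ^ 2 * B = -(algebraMap R T (x * y * z) * A)
      + algebraMap R T (x * y + y * z + x * z) * (A * B) + A * B * A ^ 2
      - algebraMap R T (x + y + z) * (A * B ^ 2) + A ^ 2 * B ^ 2 := by
  rw [h, pow_three_of_cubic hB]
  simp only [Algebra.algebraMap_eq_smul_one, smul_mul_assoc, mul_add, mul_sub, mul_smul_comm,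
    one_mul, mul_one]
  module

/- The `Σ`-terms on the right are `(B - A)` times the cubic relation of `C`, plus `Σ₁` times
the identity `h4`. -/
theorem sq_mul_sq_of_cubic
    (hC : (C - algebraMap R T x) * (C - algebraMap R T y) * (C - algebraMap R T z) = 0)
    (h4 : B * C ^ 2 = -(A ^ 2 * C) + A ^ 2 * B + B ^ 2 * C - A * B ^ 2 + A * C ^ 2)
    (h6 : B ^ 2 * C ^ 2 =
      B * C ^ 3 - A * C ^ 3 - A ^ 2 * B * C + A * B ^ 2 * C + A ^ 2 * C ^ 2) :
    B ^ 2 * C ^ 2 = -(algebraMap R T (x * y * z) * A)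
      + algebraMap R T (x * y + y * z + x * z) * (A * C)
      - algebraMap R T (x + y + z) * (A ^ 2 * C) + algebraMap R T (x * y * z) * B
      - algebraMap R T (x * y + y * z + x * z) * (B * C)
      + algebraMap R T (x + y + z) * (A ^ 2 * B) - A ^ 2 * B * C
      + algebraMap R T (x + y + z) * (B ^ 2 * C) - algebraMap R T (x + y + z) * (A * B ^ 2)
      + A * B ^ 2 * C + A ^ 2 * C ^ 2 := by
  rw [h6, pow_three_of_cubic hC]
  simp only [Algebra.algebraMap_eq_smul_one, smul_mul_assoc, mul_add, mul_sub, mul_smul_comm,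
    one_mul, mul_one, h4]
  module

theorem sq_mul_sq_of_cubic_of_commute
    (hC : (C - algebraMap R T x) * (C - algebraMap R T y) * (C - algebraMap R T z) = 0)
    (h4 : B * C ^ 2 = -(A ^ 2 * C) + A ^ 2 * B + B ^ 2 * C - A * B ^ 2 + A * C ^ 2)
    (h5 : B ^ 2 * C * A = B * A ^ 2 * C - A ^ 2 * B * C + A * B ^ 2 * C)
    (h6 : B ^ 2 * C ^ 2 =
      B * C ^ 3 - A * C ^ 3 - A ^ 2 * B * C + A * B ^ 2 * C + A ^ 2 * C ^ 2)
    (hAC : Commute A C) :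
    B ^ 2 * C ^ 2 = -(algebraMap R T (x * y * z) * A)
      + algebraMap R T (x * y + y * z + x * z) * (A * C)
      - algebraMap R T (x + y + z) * (A ^ 2 * C) + algebraMap R T (x * y * z) * B
      - algebraMap R T (x * y + y * z + x * z) * (B * C)
      + algebraMap R T (x + y + z) * (A ^ 2 * B)
      + algebraMap R T (x + y + z) * (B ^ 2 * C) - algebraMap R T (x + y + z) * (A * B ^ 2)
      + A ^ 2 * C ^ 2 + B ^ 2 * A * C - B * A ^ 2 * C := by
  have h5' : B ^ 2 * A * C = B * A ^ 2 * C - A ^ 2 * B * C + A * B ^ 2 * C := by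
    rw [mul_assoc, hAC.eq, ← mul_assoc, h5]
  rw [sq_mul_sq_of_cubic hC h4 h6, h5']
  abel

end CubicRelation

section Generators
variable {R : Type} [CommRing R] {m : ℕ}
open Polynomial

theorem ι_σ_mul_ι_σ_mul_ι_σ {i j : Fin m} (h : (i : ℕ) + 1 = j) :
    (ι (σ i) * ι (σ j) * ι (σ i) : BA R m) = ι (σ j) * ι (σ i) * ι (σ j) := by
  simp only [ι, ← map_mul, σ_mul_σ_mul_σ h]

theorem commute_ι_σ {i j : Fin m} (h : (i : ℕ) + 2 ≤ j) :
    Commute (ι (σ i) : BA R m) (ι (σ j)) := by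
  simp only [Commute, SemiconjBy, ι, ← map_mul, σ_mul_σ_comm h]

theorem aeval_ι_σ_mem {I : TwoSidedIdeal (BA R (m + 1))} {p : R[X]}
    (h : aeval (ι (σ 0)) p ∈ I) (j : Fin (m + 1)) : aeval (ι (σ j)) p ∈ I := by
  obtain ⟨w, hw⟩ := exists_σ_eq_conj_σ_zero j
  let u : (BA R (m + 1))ˣ := (MonoidAlgebra.of R (BraidGroup (m + 1))).toHomUnits w
  have hconj : ι (σ j) = MulSemiringAction.toAlgEquiv R (BA R (m + 1)) (ConjAct.toConjAct u)
      (ι (σ 0)) := by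
    change _ = ConjAct.toConjAct u • (ι (σ 0) : BA R (m + 1))
    rw [ConjAct.units_smul_def, ConjAct.ofConjAct_toConjAct, ← map_inv, hw]
    simp only [u, ι, MonoidHom.coe_toHomUnits, map_mul]
  rw [hconj, aeval_algEquiv]
  change ConjAct.toConjAct u • aeval (ι (σ 0) : BA R (m + 1)) p ∈ I
  rw [ConjAct.units_smul_def, ConjAct.ofConjAct_toConjAct]
  exact I.mul_mem_right _ _ (I.mul_mem_left _ _ h)

theorem aeval_ι_σ_zero_quadratic_mem_J (x y : R) :
    aeval (ι (σ 0)) ((X - C x) * (X - C y)) ∈ J R x y m :=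
  TwoSidedIdeal.subset_span (by simp [quadElt])

theorem aeval_ι_σ_zero_cubic_mem_J (x y z : R) :
    aeval (ι (σ 0)) ((X - C x) * (X - C y) * (X - C z)) ∈ J R x y m := by
  rw [map_mul]
  exact (J R x y m).mul_mem_right _ _ (aeval_ι_σ_zero_quadratic_mem_J x y)

theorem heckeQMk_σ_mul_self (x y : R) (j : Fin (m + 1)) :
    heckeQMk R x y m (ι (σ j)) * heckeQMk R x y m (ι (σ j)) =
      (x + y) • heckeQMk R x y m (ι (σ j)) - (x * y) • 1 := by
  have h := mkAlgHom_idRel_eq_zero (S := R)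
    (aeval_ι_σ_mem (aeval_ι_σ_zero_quadratic_mem_J x y) j)
  rw [← heckeQMk, ← aeval_algHom_apply] at h
  exact mul_self_eq_of_quadratic (by simpa using h)

theorem tMk_σ_cubic (a b c : R) (j : Fin (m + 1)) :
    (tMk R a b c m (ι (σ j)) - algebraMap R _ a) * (tMk R a b c m (ι (σ j)) - algebraMap R _ b) *
      (tMk R a b c m (ι (σ j)) - algebraMap R _ c) = 0 := by
  have hmem : aeval (ι (σ 0)) ((X - C a) * (X - C b) * (X - C c)) ∈
      J R a b m ⊓ J R a c m ⊓ J R b c m := by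
    refine ⟨⟨?_, ?_⟩, ?_⟩
    · exact aeval_ι_σ_zero_cubic_mem_J a b c
    · rw [show (X - C a) * (X - C b) * (X - C c) = (X - C a) * (X - C c) * (X - C b) by ring]
      exact aeval_ι_σ_zero_cubic_mem_J a c b
    · rw [show (X - C a) * (X - C b) * (X - C c) = (X - C b) * (X - C c) * (X - C a) by ring]
      exact aeval_ι_σ_zero_cubic_mem_J b c a
  have h := mkAlgHom_idRel_eq_zero (S := R) (aeval_ι_σ_mem hmem j)
  rw [← tMk, ← aeval_algHom_apply] at h
  simpa using h

end Generators

namespace TripleHecke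
variable {R : Type} [CommRing R] {a b c : R} {m : ℕ}

theorem tMk_eq_of_heckeQMk_eq {u v : BA R (m + 1)}
    (hab : heckeQMk R a b m u = heckeQMk R a b m v)
    (hac : heckeQMk R a c m u = heckeQMk R a c m v)
    (hbc : heckeQMk R b c m u = heckeQMk R b c m v) : tMk R a b c m u = tMk R a b c m v :=
  mkAlgHom_idRel_eq_iff.mpr ⟨⟨mkAlgHom_idRel_eq_iff.mp hab, mkAlgHom_idRel_eq_iff.mp hac⟩,
    mkAlgHom_idRel_eq_iff.mp hbc⟩

local notation "𝐭" k => tMk R a b c m (ι (σ k))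

theorem sq_mul_sub_mul_sq (i j : Fin (m + 1)) :
    (𝐭 j) ^ 2 * (𝐭 i) - (𝐭 i) * (𝐭 j) ^ 2 = (𝐭 j) * (𝐭 i) ^ 2 - (𝐭 i) ^ 2 * (𝐭 j) := by
  simp only [← map_pow, ← map_mul, ← map_sub]
  refine tMk_eq_of_heckeQMk_eq ?_ ?_ ?_ <;>
  · simp only [map_pow, map_mul, map_sub]
    exact sq_mul_sub_mul_sq_of_quadratic (heckeQMk_σ_mul_self _ _ i) (heckeQMk_σ_mul_self _ _ j)

theorem mul_sq_mul (i j : Fin (m + 1)) (h : (i : ℕ) + 1 = j) :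
    (𝐭 j) * (𝐭 i) ^ 2 * (𝐭 j) = -((𝐭 i) * (𝐭 j) ^ 3) + (𝐭 i) * (𝐭 j) * (𝐭 i) ^ 2
      + (𝐭 i) ^ 2 * (𝐭 j) ^ 2 := by
  simp only [← map_pow, ← map_mul, ← map_neg, ← map_add]
  refine tMk_eq_of_heckeQMk_eq ?_ ?_ ?_ <;>
  · simp only [map_pow, map_mul, map_neg, map_add]
    refine mul_sq_mul_of_quadratic_of_braid (heckeQMk_σ_mul_self _ _ i)
      (heckeQMk_σ_mul_self _ _ j) ?_
    simp only [← map_mul, ι_σ_mul_ι_σ_mul_ι_σ h]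

theorem mul_sq (i j k : Fin (m + 1)) :
    (𝐭 j) * (𝐭 k) ^ 2 = -((𝐭 i) ^ 2 * (𝐭 k)) + (𝐭 i) ^ 2 * (𝐭 j) + (𝐭 j) ^ 2 * (𝐭 k)
      - (𝐭 i) * (𝐭 j) ^ 2 + (𝐭 i) * (𝐭 k) ^ 2 := by
  simp only [← map_pow, ← map_mul, ← map_neg, ← map_add, ← map_sub]
  refine tMk_eq_of_heckeQMk_eq ?_ ?_ ?_ <;>
  · simp only [map_pow, map_mul, map_neg, map_add, map_sub]
    exact mul_sq_eq_of_quadratic (heckeQMk_σ_mul_self _ _ i) (heckeQMk_σ_mul_self _ _ j)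
      (heckeQMk_σ_mul_self _ _ k)

theorem sq_mul_mul (i j k : Fin (m + 1)) (h : (i : ℕ) + 2 ≤ k) :
    (𝐭 j) ^ 2 * (𝐭 k) * (𝐭 i) = (𝐭 j) * (𝐭 i) ^ 2 * (𝐭 k) - (𝐭 i) ^ 2 * (𝐭 j) * (𝐭 k)
      + (𝐭 i) * (𝐭 j) ^ 2 * (𝐭 k) := by
  simp only [← map_pow, ← map_mul, ← map_add, ← map_sub]
  refine tMk_eq_of_heckeQMk_eq ?_ ?_ ?_ <;>
  · simp only [map_pow, map_mul, map_add, map_sub]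
    exact sq_mul_mul_of_quadratic_of_commute (heckeQMk_σ_mul_self _ _ i)
      (heckeQMk_σ_mul_self _ _ j) ((commute_ι_σ h).map _)

theorem sq_mul_sq (i j k : Fin (m + 1)) :
    (𝐭 j) ^ 2 * (𝐭 k) ^ 2 = (𝐭 j) * (𝐭 k) ^ 3 - (𝐭 i) * (𝐭 k) ^ 3
      - (𝐭 i) ^ 2 * (𝐭 j) * (𝐭 k) + (𝐭 i) * (𝐭 j) ^ 2 * (𝐭 k) + (𝐭 i) ^ 2 * (𝐭 k) ^ 2 := by
  simp only [← map_pow, ← map_mul, ← map_add, ← map_sub]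
  refine tMk_eq_of_heckeQMk_eq ?_ ?_ ?_ <;>
  · simp only [map_pow, map_mul, map_add, map_sub]
    exact sq_mul_sq_of_quadratic (heckeQMk_σ_mul_self _ _ i) (heckeQMk_σ_mul_self _ _ j)
      (heckeQMk_σ_mul_self _ _ k)

end TripleHecke

theorem statement7_general (R : Type) [CommRing R] (a b c : R) :
    let S1 := a + b + c
    let S2 := a * b + b * c + a * c
    let S3 := a * b * c
    let C3 := algebraMap R (TripleHecke R a b c 1)
    let s : Fin 2 → TripleHecke R a b c 1 := fun i => tMk R a b c 1 (ι (σ i))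
    let C4 := algebraMap R (TripleHecke R a b c 2)
    let t : Fin 3 → TripleHecke R a b c 2 := fun i => tMk R a b c 2 (ι (σ i))
    (∀ i : Fin 2, (s i - C3 a) * (s i - C3 b) * (s i - C3 c) = 0) ∧
    (s 1 ^ 2 * s 0 - s 0 * s 1 ^ 2 = s 1 * s 0 ^ 2 - s 0 ^ 2 * s 1) ∧
    (s 1 * s 0 ^ 2 * s 1 = -(C3 S3 * s 0) + C3 S2 * (s 0 * s 1) + s 0 * s 1 * s 0 ^ 2
      - C3 S1 * (s 0 * s 1 ^ 2) + s 0 ^ 2 * s 1 ^ 2) ∧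
    (t 1 * t 2 ^ 2 =
      -(t 0 ^ 2 * t 2) + t 0 ^ 2 * t 1 + t 1 ^ 2 * t 2 - t 0 * t 1 ^ 2 + t 0 * t 2 ^ 2) ∧
    (t 1 ^ 2 * t 2 * t 0 = t 1 * t 0 ^ 2 * t 2 - t 0 ^ 2 * t 1 * t 2 + t 0 * t 1 ^ 2 * t 2) ∧
    (t 1 ^ 2 * t 2 ^ 2 = -(C4 S3 * t 0) + C4 S2 * (t 0 * t 2) - C4 S1 * (t 0 ^ 2 * t 2)
      + C4 S3 * t 1 - C4 S2 * (t 1 * t 2) + C4 S1 * (t 0 ^ 2 * t 1) - t 0 ^ 2 * t 1 * t 2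
      + C4 S1 * (t 1 ^ 2 * t 2) - C4 S1 * (t 0 * t 1 ^ 2) + t 0 * t 1 ^ 2 * t 2
      + t 0 ^ 2 * t 2 ^ 2) ∧
    (t 1 ^ 2 * t 2 ^ 2 = -(C4 S3 * t 0) + C4 S2 * (t 0 * t 2) - C4 S1 * (t 0 ^ 2 * t 2)
      + C4 S3 * t 1 - C4 S2 * (t 1 * t 2) + C4 S1 * (t 0 ^ 2 * t 1)
      + C4 S1 * (t 1 ^ 2 * t 2) - C4 S1 * (t 0 * t 1 ^ 2) + t 0 ^ 2 * t 2 ^ 2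
      + t 1 ^ 2 * t 0 * t 2 - t 1 * t 0 ^ 2 * t 2) := by
  intro S1 S2 S3 C3 s C4 t
  have cubic₃ := tMk_σ_cubic (m := 1) a b c
  have cubic₄ := tMk_σ_cubic (m := 2) a b c 2
  have h4 : t 1 * t 2 ^ 2 = _ := TripleHecke.mul_sq 0 1 2
  have h5 : t 1 ^ 2 * t 2 * t 0 = _ := TripleHecke.sq_mul_mul 0 1 2 (by norm_num)
  have h6 : t 1 ^ 2 * t 2 ^ 2 = _ := TripleHecke.sq_mul_sq 0 1 2
  have h02 : Commute (t 0) (t 2) := (commute_ι_σ (by norm_num)).map _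
  exact ⟨cubic₃, TripleHecke.sq_mul_sub_mul_sq 0 1,
    mul_sq_mul_of_cubic (cubic₃ 1) (TripleHecke.mul_sq_mul 0 1 rfl), h4, h5,
    sq_mul_sq_of_cubic cubic₄ h4 h6, sq_mul_sq_of_cubic_of_commute cubic₄ h4 h5 h6 h02⟩

/-- Let `R` be an integral domain and `a, b, c ∈ R^×` with
`(a-b)(a-c)(b-c) ∈ R^×`, and set `Σ₁ = a+b+c`, `Σ₂ = ab+bc+ac`, `Σ₃ = abc`.  Then the
listed identities (1)–(3) hold inside `ℋ₃` and the identities (4)–(7) hold inside `ℋ₄`. -/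
theorem statement7 (R : Type) [CommRing R] [IsDomain R] (a b c : R)
    (ha : IsUnit a) (hb : IsUnit b) (hc : IsUnit c)
    (h : IsUnit ((a - b) * (a - c) * (b - c))) :
    let S1 := a + b + c
    let S2 := a * b + b * c + a * c
    let S3 := a * b * c
    let C3 := algebraMap R (TripleHecke R a b c 1)
    let s : Fin 2 → TripleHecke R a b c 1 := fun i => tMk R a b c 1 (ι (σ i))
    let C4 := algebraMap R (TripleHecke R a b c 2)
    let t : Fin 3 → TripleHecke R a b c 2 := fun i => tMk R a b c 2 (ι (σ i))
    (∀ i : Fin 2, (s i - C3 a) * (s i - C3 b) * (s i - C3 c) = 0) ∧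
    (s 1 ^ 2 * s 0 - s 0 * s 1 ^ 2 = s 1 * s 0 ^ 2 - s 0 ^ 2 * s 1) ∧
    (s 1 * s 0 ^ 2 * s 1 = -(C3 S3 * s 0) + C3 S2 * (s 0 * s 1) + s 0 * s 1 * s 0 ^ 2
      - C3 S1 * (s 0 * s 1 ^ 2) + s 0 ^ 2 * s 1 ^ 2) ∧
    (t 1 * t 2 ^ 2 =
      -(t 0 ^ 2 * t 2) + t 0 ^ 2 * t 1 + t 1 ^ 2 * t 2 - t 0 * t 1 ^ 2 + t 0 * t 2 ^ 2) ∧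
    (t 1 ^ 2 * t 2 * t 0 = t 1 * t 0 ^ 2 * t 2 - t 0 ^ 2 * t 1 * t 2 + t 0 * t 1 ^ 2 * t 2) ∧
    (t 1 ^ 2 * t 2 ^ 2 = -(C4 S3 * t 0) + C4 S2 * (t 0 * t 2) - C4 S1 * (t 0 ^ 2 * t 2)
      + C4 S3 * t 1 - C4 S2 * (t 1 * t 2) + C4 S1 * (t 0 ^ 2 * t 1) - t 0 ^ 2 * t 1 * t 2
      + C4 S1 * (t 1 ^ 2 * t 2) - C4 S1 * (t 0 * t 1 ^ 2) + t 0 * t 1 ^ 2 * t 2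
      + t 0 ^ 2 * t 2 ^ 2) ∧
    (t 1 ^ 2 * t 2 ^ 2 = -(C4 S3 * t 0) + C4 S2 * (t 0 * t 2) - C4 S1 * (t 0 ^ 2 * t 2)
      + C4 S3 * t 1 - C4 S2 * (t 1 * t 2) + C4 S1 * (t 0 ^ 2 * t 1)
      + C4 S1 * (t 1 ^ 2 * t 2) - C4 S1 * (t 0 * t 1 ^ 2) + t 0 ^ 2 * t 2 ^ 2
      + t 1 ^ 2 * t 0 * t 2 - t 1 * t 0 ^ 2 * t 2) :=
  statement7_general R a b c

end Cubic
end
end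

section
/- Let k be a field of characteristic different from 2 and α, β ∈ k with αβ ≠ 0 and α ≠ β. In 𝔙_2 the element t satisfies t(t − α)(t − β) = 0, and there is a k-algebra isomorphism 𝔙_2 ≅ k × k × k under which t ↦ (0, α, β) and z ↦ (−1, 1, 1). -/
noncomputable section

namespace Vogel

variable (k : Type) [Field k] (α β : k)

/-- The generator `z` (the image of the transposition `(1 2)`). -/
def zf : FreeAlgebra k (Fin 2) := FreeAlgebra.ι k 0

/-- The generator `t` (the image of the infinitesimal braid generator `t₁₂`). -/
def tf : FreeAlgebra k (Fin 2) := FreeAlgebra.ι k 1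

/-- The defining relations of Vogel's algebra `𝔙₂`: the ideal generated by
`z² - 1`, `zt - t`, `tz - t` and `t² - (α+β)t + (αβ/2)(1+z)`. -/
def vogelRel : FreeAlgebra k (Fin 2) → FreeAlgebra k (Fin 2) → Prop := fun x y =>
  (x = zf k * zf k ∧ y = 1) ∨
  (x = zf k * tf k ∧ y = tf k) ∨
  (x = tf k * zf k ∧ y = tf k) ∨
  (x = tf k * tf k - (α + β) • tf k + (α * β / 2) • (1 + zf k) ∧ y = 0)

/-- Vogel's algebra on two strands. -/
abbrev V2 : Type := RingQuot (vogelRel k α β)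

/-- The image of `t` in `𝔙₂`. -/
def T : V2 k α β := RingQuot.mkAlgHom k (vogelRel k α β) (tf k)

/-- The image of `z` in `𝔙₂`. -/
def Z : V2 k α β := RingQuot.mkAlgHom k (vogelRel k α β) (zf k)

/-- Let `k` be a field of characteristic `≠ 2` and `α, β ∈ k` with
`αβ ≠ 0` and `α ≠ β`.  In `𝔙₂` the element `t` satisfies `t(t-α)(t-β) = 0`, and there is a
`k`-algebra isomorphism `𝔙₂ ≅ k × k × k` with `t ↦ (0, α, β)` and `z ↦ (-1, 1, 1)`. -/
theorem statement12 (hk : ringChar k ≠ 2) (h0 : α * β ≠ 0) (hαβ : α ≠ β) :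
    T k α β * (T k α β - algebraMap k (V2 k α β) α) *
        (T k α β - algebraMap k (V2 k α β) β) = 0 ∧
    ∃ e : V2 k α β ≃ₐ[k] k × k × k,
      e (T k α β) = (0, α, β) ∧ e (Z k α β) = (-1, 1, 1) := by
  classical
  have h2 : (2 : k) ≠ 0 := Ring.two_ne_zero hk
  have hαβ' : α - β ≠ 0 := sub_ne_zero.mpr hαβ
  -- the forward algebra hom
  set g : Fin 2 → k × k × k := ![((-1 : k), (1 : k), (1 : k)), ((0 : k), α, β)] with hg
  set f : FreeAlgebra k (Fin 2) →ₐ[k] k × k × k := FreeAlgebra.lift k g with hfdef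
  have hf0 : f (zf k) = ((-1 : k), (1 : k), (1 : k)) := by
    simp [hfdef, zf, hg]
  have hf1 : f (tf k) = ((0 : k), α, β) := by
    simp [hfdef, tf, hg]
  have hrel : ∀ ⦃x y⦄, vogelRel k α β x y → f x = f y := by
    rintro x y (⟨hx, hy⟩ | ⟨hx, hy⟩ | ⟨hx, hy⟩ | ⟨hx, hy⟩) <;> subst hx <;> subst hy <;>
      simp only [map_mul, map_sub, map_add, map_smul, map_one, map_zero, hf0, hf1] <;>
      refine Prod.ext ?_ (Prod.ext ?_ ?_) <;>
      simp [Prod.ext_iff, Prod.fst_mul, Prod.snd_mul] <;>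
      field_simp <;> ring
  set e0 : V2 k α β →ₐ[k] k × k × k := RingQuot.liftAlgHom k ⟨f, hrel⟩ with he0
  have heT : e0 (T k α β) = ((0 : k), α, β) := by
    rw [he0, T, RingQuot.liftAlgHom_mkAlgHom_apply]; exact hf1
  have heZ : e0 (Z k α β) = ((-1 : k), (1 : k), (1 : k)) := by
    rw [he0, Z, RingQuot.liftAlgHom_mkAlgHom_apply]; exact hf0
  -- relations in V2
  have hZZ : Z k α β * Z k α β = 1 := by
    have h := RingQuot.mkAlgHom_rel (S := k) (s := vogelRel k α β)
      (x := zf k * zf k) (y := 1) (Or.inl ⟨rfl, rfl⟩)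
    simpa [Z, map_mul, map_one] using h
  have hZT : Z k α β * T k α β = T k α β := by
    have h := RingQuot.mkAlgHom_rel (S := k) (s := vogelRel k α β)
      (x := zf k * tf k) (y := tf k) (Or.inr (Or.inl ⟨rfl, rfl⟩))
    simpa [Z, T, map_mul] using h
  have hTZ : T k α β * Z k α β = T k α β := by
    have h := RingQuot.mkAlgHom_rel (S := k) (s := vogelRel k α β)
      (x := tf k * zf k) (y := tf k) (Or.inr (Or.inr (Or.inl ⟨rfl, rfl⟩)))
    simpa [Z, T, map_mul] using h
  have hTT0 : T k α β * T k α β - (α + β) • T k α β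
      + (α * β / 2) • (1 + Z k α β) = 0 := by
    have h := RingQuot.mkAlgHom_rel (S := k) (s := vogelRel k α β)
      (x := tf k * tf k - (α + β) • tf k + (α * β / 2) • (1 + zf k)) (y := 0)
      (Or.inr (Or.inr (Or.inr ⟨rfl, rfl⟩)))
    simpa [Z, T, map_mul, map_sub, map_add, map_smul, map_one, map_zero] using h
  have hTT : T k α β * T k α β
      = (α + β) • T k α β - (α * β / 2) • (1 : V2 k α β) - (α * β / 2) • Z k α β := by
    rw [← sub_eq_zero]
    calc T k α β * T k α β -
          ((α + β) • T k α β - (α * β / 2) • (1 : V2 k α β) - (α * β / 2) • Z k α β)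
        = T k α β * T k α β - (α + β) • T k α β + (α * β / 2) • (1 + Z k α β) := by
          rw [smul_add]; abel
      _ = 0 := hTT0
  -- the span of 1, Z, T
  set S : Submodule k (V2 k α β) :=
    Submodule.span k ({1, Z k α β, T k α β} : Set (V2 k α β)) with hS
  have h1S : (1 : V2 k α β) ∈ S := Submodule.subset_span (by simp)
  have hZS : Z k α β ∈ S := Submodule.subset_span (by simp)
  have hTS : T k α β ∈ S := Submodule.subset_span (by simp)
  have key : ∀ a ∈ S, ∀ b ∈ S, a * b ∈ S := by
    intro a ha
    induction ha using Submodule.span_induction with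
    | mem x hx =>
      intro b hb
      induction hb using Submodule.span_induction with
      | mem y hy =>
        rcases hx with rfl | rfl | rfl <;> rcases hy with rfl | rfl | rfl <;>
          simp only [one_mul, mul_one, hZZ, hZT, hTZ, hTT]
        · exact h1S
        · exact hZS
        · exact hTS
        · exact hZS
        · exact h1S
        · exact hTS
        · exact hTS
        · exact hTS
        · exact S.sub_mem (S.sub_mem (S.smul_mem _ hTS) (S.smul_mem _ h1S)) (S.smul_mem _ hZS)
      | zero => simpa using S.zero_mem
      | add y z _ _ hy hz => rw [mul_add]; exact S.add_mem hy hz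
      | smul r y _ hy => rw [mul_smul_comm]; exact S.smul_mem _ hy
    | zero => intro b _; simpa using S.zero_mem
    | add x y _ _ hx hy => intro b hb; rw [add_mul]; exact S.add_mem (hx b hb) (hy b hb)
    | smul r x _ hx => intro b hb; rw [smul_mul_assoc]; exact S.smul_mem _ (hx b hb)
  have hspan : ∀ v : V2 k α β, v ∈ S := by
    intro v
    obtain ⟨x, rfl⟩ := RingQuot.mkAlgHom_surjective k (vogelRel k α β) v
    induction x using FreeAlgebra.induction with
    | grade0 r =>
      rw [AlgHom.commutes, Algebra.algebraMap_eq_smul_one]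
      exact S.smul_mem _ h1S
    | grade1 i =>
      fin_cases i
      · exact hZS
      · exact hTS
    | mul a b ha hb => rw [map_mul]; exact key _ ha _ hb
    | add a b ha hb => rw [map_add]; exact S.add_mem ha hb
  -- injectivity
  have hinj : Function.Injective e0 := by
    rw [injective_iff_map_eq_zero]
    intro v hv
    have hv' : v ∈ Submodule.span k (insert (1 : V2 k α β) {Z k α β, T k α β}) := hspan v
    obtain ⟨a, w, hw, rfl⟩ := Submodule.mem_span_insert.mp hv'
    obtain ⟨b, c, rfl⟩ := Submodule.mem_span_pair.mp hw
    rw [map_add, map_add, map_smul, map_smul, map_smul, map_one, heZ, heT] at hv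
    have h1 : a + -b = 0 := by
      have := congrArg Prod.fst hv
      simpa [smul_eq_mul] using this
    have h2' : a + (b + c * α) = 0 := by
      have := congrArg (fun p => p.2.1) hv
      simpa [smul_eq_mul] using this
    have h3 : a + (b + c * β) = 0 := by
      have := congrArg (fun p => p.2.2) hv
      simpa [smul_eq_mul] using this
    have hc : c = 0 := by
      have : c * (α - β) = 0 := by linear_combination h2' - h3
      rcases mul_eq_zero.mp this with h | h
      · exact h
      · exact absurd h hαβ'
    have ha : a = 0 := by
      have : 2 * a = 0 := by linear_combination h1 + h2' - hc * α
      rcases mul_eq_zero.mp this with h | h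
      · exact absurd h h2
      · exact h
    have hb : b = 0 := by linear_combination ha - h1
    simp [ha, hb, hc]
  -- surjectivity
  have hsurj : Function.Surjective e0 := by
    rintro ⟨a, b, c⟩
    set w : k := (b - c) / (α - β) with hw
    set x : k := (a + (b - w * α)) / 2 with hx
    set y : k := ((b - w * α) - a) / 2 with hy
    refine ⟨algebraMap k (V2 k α β) x + y • Z k α β + w • T k α β, ?_⟩
    rw [map_add, map_add, map_smul, map_smul, heZ, heT, AlgHom.commutes]
    have halg : algebraMap k (k × k × k) x = (x, x, x) := rfl
    rw [halg]
    refine Prod.ext ?_ (Prod.ext ?_ ?_)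
    · show x + y * (-1) + w * 0 = a
      rw [hx, hy]; field_simp; ring
    · show x + y * 1 + w * α = b
      rw [hx, hy]; field_simp; ring
    · show x + y * 1 + w * β = c
      rw [hx, hy, hw]; field_simp; ring
  refine ⟨?_, AlgEquiv.ofBijective e0 ⟨hinj, hsurj⟩, heT, heZ⟩
  apply hinj
  rw [map_zero, map_mul, map_mul, map_sub, map_sub, heT, AlgHom.commutes, AlgHom.commutes]
  have hα' : algebraMap k (k × k × k) α = (α, α, α) := rfl
  have hβ' : algebraMap k (k × k × k) β = (β, β, β) := rfl
  rw [hα', hβ']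
  refine Prod.ext ?_ (Prod.ext ?_ ?_) <;> simp <;> ring

end Vogel
end
end

section
/- For every n ≥ 2, in the braid group B_{n+1} the following two identities hold: s_n^{-1} (s_{n-1}^{-1} s_{n-2}^{-1} ⋯ s_2^{-1} s_1 s_2^{-1} ⋯ s_{n-1}^{-1}) s_n = (s_{n-1} s_{n-2} ⋯ s_1) (s_n^{-1} s_{n-1}^{-1} ⋯ s_3^{-1} s_2 s_3^{-1} ⋯ s_n^{-1}) (s_{n-1} s_{n-2} ⋯ s_1)^{-1}, and s_n (s_{n-1} s_{n-2} ⋯ s_2 s_1^{-1} s_2 ⋯ s_{n-1}) s_n^{-1} = (s_{n-1}^{-1} s_{n-2}^{-1} ⋯ s_1^{-1}) (s_n s_{n-1} ⋯ s_3 s_2^{-1} s_3 ⋯ s_n) (s_{n-1}^{-1} s_{n-2}^{-1} ⋯ s_1^{-1})^{-1}. -/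
noncomputable section
open scoped Classical

namespace Cubic

/-- The ordered product `f lo * f (lo+1) * ⋯ * f (lo+len-1)`. -/
def ascProd {G : Type} [Group G] (f : ℕ → G) (lo len : ℕ) : G :=
  ((List.range' lo len).map f).prod

/-- The ordered product `f (lo+len-1) * ⋯ * f (lo+1) * f lo`. -/
def descProd {G : Type} [Group G] (f : ℕ → G) (lo len : ℕ) : G :=
  ((List.range' lo len).reverse.map f).prod

/-!
Conjugation by `Δ = s_n ⋯ s_1` sends `s_i` to `s_{i+1}` for `i < n`, since `Δ` factors as
`L (s_{i+1} s_i) Q` with `L` commuting with `s_i` and `Q` with `s_{i+1}`. Hence it carries the word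
`s_{n-1}⁻¹ ⋯ s_2⁻¹ s_1 s_2⁻¹ ⋯ s_{n-1}⁻¹` to the same word shifted by one, and as
`Δ = s_n (s_{n-1} ⋯ s_1)`, conjugating by `s_n` is conjugating by `Δ` followed by `s_{n-1} ⋯ s_1`.
The second identity is the first one for the elements `s_i⁻¹`, which satisfy the same relations.
-/

variable {G : Type} [Group G]

lemma descProd_succ (f : ℕ → G) (lo len : ℕ) :
    descProd f lo (len + 1) = descProd f (lo + 1) len * f lo := by
  simp [descProd, List.range'_succ]

lemma ascProd_succ (f : ℕ → G) (lo len : ℕ) :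
    ascProd f lo (len + 1) = f lo * ascProd f (lo + 1) len := by
  simp [ascProd, List.range'_succ]

lemma descProd_add (f : ℕ → G) (lo m k : ℕ) :
    descProd f lo (m + k) = descProd f (lo + m) k * descProd f lo m := by
  rw [descProd, descProd, descProd, ← List.range'_append_1, List.reverse_append, List.map_append,
    List.prod_append]

lemma descProd_succ_last (f : ℕ → G) (lo len : ℕ) :
    descProd f lo (len + 1) = f (lo + len) * descProd f lo len := by
  rw [descProd_add]
  simp [descProd]

lemma commute_descProd {g : G} {f : ℕ → G} {lo len : ℕ}
    (h : ∀ j, lo ≤ j → j < lo + len → Commute g (f j)) : Commute g (descProd f lo len) :=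
  Commute.list_prod_right _ _ <| by
    simp only [List.mem_map, List.mem_reverse, List.mem_range'_1]
    rintro _ ⟨j, ⟨hlo, hlen⟩, rfl⟩
    exact h j hlo hlen

section MapShift

variable {H F : Type} [Group H] [FunLike F G H] [MonoidHomClass F G H] (φ : F)
  {f : ℕ → G} {f' : ℕ → H}

lemma map_descProd_of_shift {lo len : ℕ} (h : ∀ j, lo ≤ j → j < lo + len → φ (f j) = f' (j + 1)) :
    φ (descProd f lo len) = descProd f' (lo + 1) len := by
  induction len generalizing lo with
  | zero => exact map_one φ
  | succ len ih =>
    rw [descProd_succ, descProd_succ, map_mul, h lo le_rfl (by omega),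
      ih fun j _ _ => h j (by omega) (by omega)]

lemma map_ascProd_of_shift {lo len : ℕ} (h : ∀ j, lo ≤ j → j < lo + len → φ (f j) = f' (j + 1)) :
    φ (ascProd f lo len) = ascProd f' (lo + 1) len := by
  induction len generalizing lo with
  | zero => exact map_one φ
  | succ len ih =>
    rw [ascProd_succ, ascProd_succ, map_mul, h lo le_rfl (by omega),
      ih fun j _ _ => h j (by omega) (by omega)]

end MapShift

def handle (t : ℕ → G) (lo len : ℕ) : G :=
  descProd (fun k => (t k)⁻¹) (lo + 1) len * t lo * ascProd (fun k => (t k)⁻¹) (lo + 1) len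

lemma map_handle_of_shift {F : Type} [FunLike F G G] [MonoidHomClass F G G] (φ : F)
    {t : ℕ → G} {lo len : ℕ} (h : ∀ j, lo ≤ j → j ≤ lo + len → φ (t j) = t (j + 1)) :
    φ (handle t lo len) = handle t (lo + 1) len := by
  have hinv : ∀ j, lo + 1 ≤ j → j < lo + 1 + len → φ (t j)⁻¹ = (t (j + 1))⁻¹ :=
    fun j _ _ => by rw [map_inv, h j (by omega) (by omega)]
  rw [handle, handle, map_mul, map_mul, map_descProd_of_shift (f' := fun k => (t k)⁻¹) φ hinv,
    map_ascProd_of_shift (f' := fun k => (t k)⁻¹) φ hinv, h lo le_rfl (by omega)]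

structure SatisfiesBraidRels (t : ℕ → G) (n : ℕ) : Prop where
  braid : ∀ i, 1 ≤ i → i + 1 ≤ n → t i * t (i + 1) * t i = t (i + 1) * t i * t (i + 1)
  comm : ∀ i j, 1 ≤ i → i + 2 ≤ j → j ≤ n → Commute (t i) (t j)

namespace SatisfiesBraidRels

variable {t : ℕ → G} {n : ℕ}

lemma inv (ht : SatisfiesBraidRels t n) : SatisfiesBraidRels (fun k => (t k)⁻¹) n where
  braid i h₁ h₂ := by
    simpa only [mul_inv_rev, mul_assoc] using congrArg (·⁻¹) (ht.braid i h₁ h₂)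
  comm i j h₁ h₂ h₃ := (ht.comm i j h₁ h₂ h₃).inv_inv

lemma descProd_inv_mul_mul_descProd (ht : SatisfiesBraidRels t n) {i : ℕ} (h₁ : 1 ≤ i)
    (h₂ : i < n) : (descProd t 1 n)⁻¹ * t i * descProd t 1 n = t (i + 1) := by
  obtain ⟨p, rfl⟩ : ∃ p, i = p + 1 := ⟨i - 1, by omega⟩
  obtain ⟨k, rfl⟩ : ∃ k, n = p + 2 + k := ⟨n - (p + 2), by omega⟩
  set a := t (p + 1)
  set b := t (p + 2)
  set L := descProd t (p + 3) k
  set Q := descProd t 1 p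
  have hsplit : descProd t 1 (p + 2 + k) = L * (b * a) * Q := by
    rw [descProd_add, descProd_succ_last, descProd_succ_last, show 1 + (p + 2) = p + 3 by omega,
      show 1 + (p + 1) = p + 2 by omega, show 1 + p = p + 1 by omega, mul_assoc, mul_assoc]
  have haL : Commute a L :=
    commute_descProd fun j _ _ => ht.comm (p + 1) j (by omega) (by omega) (by omega)
  have hbQ : Commute b Q :=
    commute_descProd fun j _ _ => (ht.comm j (p + 2) (by omega) (by omega) (by omega)).symm
  have hsemiconj : a * (L * (b * a) * Q) = L * (b * a) * Q * b := by
    calc a * (L * (b * a) * Q) = L * (a * b * a) * Q := by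
          rw [← mul_assoc, ← mul_assoc, haL.eq]; group
      _ = L * (b * a * b) * Q := by rw [ht.braid (p + 1) (by omega) (by omega)]
      _ = L * (b * a) * Q * b := by simp only [mul_assoc, hbQ.eq]
  rw [hsplit, mul_assoc, hsemiconj]
  group

lemma conj_handle (ht : SatisfiesBraidRels t n) {lo len : ℕ} (hlo : 1 ≤ lo) (hlen : lo + len < n) :
    (descProd t 1 n)⁻¹ * handle t lo len * descProd t 1 n = handle t (lo + 1) len := by
  have := map_handle_of_shift (MulAut.conj (descProd t 1 n)⁻¹) (t := t) (lo := lo) (len := len)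
    fun j _ _ => by
      rw [MulAut.conj_apply, inv_inv, ht.descProd_inv_mul_mul_descProd (by omega) (by omega)]
  rwa [MulAut.conj_apply, inv_inv] at this

theorem inv_mul_handle_mul (ht : SatisfiesBraidRels t n) (hn : 2 ≤ n) :
    (t n)⁻¹ * handle t 1 (n - 2) * t n =
      descProd t 1 (n - 1) * handle t 2 (n - 2) * (descProd t 1 (n - 1))⁻¹ := by
  have hΔ : descProd t 1 n = t n * descProd t 1 (n - 1) := by
    simpa [Nat.sub_add_cancel (by omega : 1 ≤ n), Nat.add_sub_cancel' (by omega : 1 ≤ n)]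
      using descProd_succ_last t 1 (n - 1)
  rw [← ht.conj_handle le_rfl (by omega), hΔ]
  group

end SatisfiesBraidRels

lemma satisfiesBraidRels_σ (n : ℕ) (hn : 0 < n) :
    SatisfiesBraidRels (fun k => σ (⟨(k - 1) % n, Nat.mod_lt _ hn⟩ : Fin n)) n where
  braid i h₁ h₂ := PresentedGroup.mk_eq_mk_of_mul_inv_mem <| Or.inl
    ⟨_, _, by simp only [Nat.mod_eq_of_lt (by omega : i - 1 < n),
      Nat.mod_eq_of_lt (by omega : i + 1 - 1 < n)]; omega, rfl⟩
  comm i j h₁ h₂ h₃ := PresentedGroup.mk_eq_mk_of_mul_inv_mem <| Or.inr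
    ⟨_, _, by simp only [Nat.mod_eq_of_lt (by omega : i - 1 < n),
      Nat.mod_eq_of_lt (by omega : j - 1 < n)]; omega, rfl⟩

/-- For every `n ≥ 2`, in the braid group `B_{n+1}` (with Artin generators
`s_1, …, s_n`) the two identities obtained by iterated handle reduction hold:
`s_n⁻¹ (s_{n-1}⁻¹ ⋯ s_2⁻¹ s_1 s_2⁻¹ ⋯ s_{n-1}⁻¹) s_n
  = (s_{n-1} ⋯ s_1) (s_n⁻¹ ⋯ s_3⁻¹ s_2 s_3⁻¹ ⋯ s_n⁻¹) (s_{n-1} ⋯ s_1)⁻¹` and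
`s_n (s_{n-1} ⋯ s_2 s_1⁻¹ s_2 ⋯ s_{n-1}) s_n⁻¹
  = (s_{n-1}⁻¹ ⋯ s_1⁻¹) (s_n ⋯ s_3 s_2⁻¹ s_3 ⋯ s_n) (s_{n-1}⁻¹ ⋯ s_1⁻¹)⁻¹`. -/
theorem statement13 (n : ℕ) (hn : 2 ≤ n) :
    let s : ℕ → BraidGroup n := fun k => σ ⟨(k - 1) % n, Nat.mod_lt _ (by omega)⟩
    ((s n)⁻¹ * (descProd (fun k => (s k)⁻¹) 2 (n - 2) * s 1 *
        ascProd (fun k => (s k)⁻¹) 2 (n - 2)) * s n =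
      descProd s 1 (n - 1) *
        (descProd (fun k => (s k)⁻¹) 3 (n - 2) * s 2 * ascProd (fun k => (s k)⁻¹) 3 (n - 2)) *
        (descProd s 1 (n - 1))⁻¹) ∧
    (s n * (descProd s 2 (n - 2) * (s 1)⁻¹ * ascProd s 2 (n - 2)) * (s n)⁻¹ =
      descProd (fun k => (s k)⁻¹) 1 (n - 1) *
        (descProd s 3 (n - 2) * (s 2)⁻¹ * ascProd s 3 (n - 2)) *
        (descProd (fun k => (s k)⁻¹) 1 (n - 1))⁻¹) := by
  intro s
  have hs : SatisfiesBraidRels s n := satisfiesBraidRels_σ n (by omega)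
  have hs' := hs.inv.inv_mul_handle_mul hn
  simp only [handle, inv_inv] at hs'
  exact ⟨hs.inv_mul_handle_mul hn, hs'⟩

end Cubic
end
end
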